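/- arXiv:2004.06794 — 5 statements merged into one kernel-verified Lean document; each statement's English description precedes it below -/
import Mathlib

section
/- Let c : (B, b) → (A, a) be a morphism of complexes of projective R-modules with A acyclic (nonnegatively graded, homology only in degree 0, and c_0 induces the zero map appropriately so that a nullhomotopy exists). Suppose each B_i decomposes as B_i = B_i' ⊕ B_i'' with b_i(B_i') ⊆ B_{i-1}', c_i(B_i') = 0 for all i, and B_0 = B_0'. Then there exists a homotopy h : B → A[1] (i.e., a_{i+1} ∘ h_i = c_i − h_{i-1} ∘ b_i with h_{-1} = 0) such that h_i(B_i') = 0 for all i. -/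
/-!
The homotopy is built degree by degree, starting from `h₀ = 0` (possible as `c₀ = 0`). If `hₙ`
vanishes on `B'ₙ` and `aₙ hₙ bₙ = cₙ bₙ`, then `cₙ₊₁ - hₙ bₙ` lands in the cycles of `Aₙ₊₁`,
hence in the boundaries by acyclicity, and it kills `B'ₙ₊₁`. Lifting it through `aₙ₊₁` by
projectivity of `Bₙ₊₁` and precomposing with the projection onto `B''ₙ₊₁` along `B'ₙ₊₁` gives
`hₙ₊₁`, which again vanishes on `B'ₙ₊₁` and satisfies `aₙ₊₁ hₙ₊₁ bₙ₊₁ = cₙ₊₁ bₙ₊₁` since `bb = 0`.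
-/

open LinearMap

section Lifting

variable {R P M N : Type*} [Ring R] [AddCommGroup P] [Module R P] [Module.Projective R P]
  [AddCommGroup M] [Module R M] [AddCommGroup N] [Module R N]

theorem Module.Projective.exists_comp_eq_of_range_le (f : M →ₗ[R] N) (g : P →ₗ[R] N)
    (hg : range g ≤ range f) : ∃ l : P →ₗ[R] M, f ∘ₗ l = g := by
  obtain ⟨l, hl⟩ := Module.projective_lifting_property f.rangeRestrict
    (g.codRestrict (range f) fun x => hg ⟨x, rfl⟩) f.surjective_rangeRestrict
  exact ⟨l, ext fun x => congrArg Subtype.val (LinearMap.congr_fun hl x)⟩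

theorem Module.Projective.exists_comp_eq_of_range_le_of_le_ker (f : M →ₗ[R] N)
    (g : P →ₗ[R] N) (hg : range g ≤ range f) {p q : Submodule R P} (hpq : IsCompl p q)
    (hpg : p ≤ ker g) : ∃ l : P →ₗ[R] M, f ∘ₗ l = g ∧ p ≤ ker l := by
  obtain ⟨l, hl⟩ := exists_comp_eq_of_range_le f g hg
  refine ⟨l ∘ₗ q.projection p hpq.symm, ext fun x => ?_, fun x hx => ?_⟩
  · have hgp : g (p.projection q hpq x) = 0 := hpg (Submodule.projection_apply_mem hpq x)
    rw [← comp_assoc, hl, comp_apply, Submodule.projection_eq_self_sub_projection hpq, map_sub, hgp,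
      sub_zero]
  · rw [mem_ker, comp_apply, Submodule.projection_apply_of_mem_right hpq.symm hx, map_zero]

end Lifting

section Homotopy

variable {R : Type*} [Ring R] {B A : ℕ → Type*}
  [∀ i, AddCommGroup (B i)] [∀ i, Module R (B i)] [∀ i, AddCommGroup (A i)] [∀ i, Module R (A i)]
  {b : ∀ i, B (i + 1) →ₗ[R] B i} {a : ∀ i, A (i + 1) →ₗ[R] A i} {c : ∀ i, B i →ₗ[R] A i}
  {B' B'' : ∀ i, Submodule R (B i)}

theorem exists_homotopy_succ [∀ i, Module.Projective R (B i)]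
    (hB : ∀ i, ∀ x, b i (b (i + 1) x) = 0)
    (hacyc : ∀ i, range (a (i + 1)) = ker (a i))
    (hc : ∀ i, ∀ x, a i (c (i + 1) x) = c i (b i x))
    (hcompl : ∀ i, IsCompl (B' i) (B'' i))
    (hbB' : ∀ i, (B' (i + 1)).map (b i) ≤ B' i)
    (hcB' : ∀ i, ∀ x ∈ B' i, c i x = 0)
    {n : ℕ} {f : B n →ₗ[R] A (n + 1)} (hf0 : B' n ≤ ker f)
    (hf : a n ∘ₗ f ∘ₗ b n = c n ∘ₗ b n) :
    ∃ f' : B (n + 1) →ₗ[R] A (n + 2), a (n + 1) ∘ₗ f' + f ∘ₗ b n = c (n + 1) ∧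
      B' (n + 1) ≤ ker f' ∧ a (n + 1) ∘ₗ f' ∘ₗ b (n + 1) = c (n + 1) ∘ₗ b (n + 1) := by
  have hrange : range (c (n + 1) - f ∘ₗ b n) ≤ range (a (n + 1)) := by
    rintro _ ⟨x, rfl⟩
    rw [hacyc n, mem_ker, LinearMap.sub_apply, map_sub, hc]
    exact sub_eq_zero.2 (LinearMap.congr_fun hf x).symm
  have hker : B' (n + 1) ≤ ker (c (n + 1) - f ∘ₗ b n) := by
    intro x hx
    rw [mem_ker, LinearMap.sub_apply, hcB' _ x hx, comp_apply, hf0 (hbB' n ⟨x, hx, rfl⟩), sub_zero]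
  obtain ⟨f', hf', hf'0⟩ := Module.Projective.exists_comp_eq_of_range_le_of_le_ker _ _ hrange
    (hcompl (n + 1)) hker
  have hbb : b n ∘ₗ b (n + 1) = 0 := ext (hB n)
  refine ⟨f', by rw [hf', sub_add_cancel], hf'0, ?_⟩
  rw [← comp_assoc, hf', sub_comp, comp_assoc, hbb, comp_zero, sub_zero]

end Homotopy

theorem stmt4_general {R : Type*} [CommRing R]
    (B A : ℕ → Type*)
    [∀ i, AddCommGroup (B i)] [∀ i, Module R (B i)]
    [∀ i, AddCommGroup (A i)] [∀ i, Module R (A i)]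
    [∀ i, Module.Projective R (B i)]
    (b : ∀ i, B (i + 1) →ₗ[R] B i) (a : ∀ i, A (i + 1) →ₗ[R] A i)
    (c : ∀ i, B i →ₗ[R] A i)
    -- B and A are complexes
    (hB : ∀ i, ∀ x, b i (b (i + 1) x) = 0)
    -- A is acyclic: homology vanishes in positive degrees
    (hacyc : ∀ i, LinearMap.range (a (i + 1)) = LinearMap.ker (a i))
    -- c is a chain map with c₀ = 0
    (hc : ∀ i, ∀ x, a i (c (i + 1) x) = c i (b i x))
    (hc0 : c 0 = 0)
    -- the direct summands Bᵢ'
    (B' : ∀ i, Submodule R (B i)) (B'' : ∀ i, Submodule R (B i))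
    (hcompl : ∀ i, IsCompl (B' i) (B'' i))
    (hbB' : ∀ i, (B' (i + 1)).map (b i) ≤ B' i)
    (hcB' : ∀ i, ∀ x ∈ B' i, c i x = 0) :
    ∃ h : ∀ i, B i →ₗ[R] A (i + 1),
      (∀ x, a 0 (h 0 x) = c 0 x) ∧
      (∀ i, ∀ x, a (i + 1) (h (i + 1) x) + h i (b i x) = c (i + 1) x) ∧
      (∀ i, ∀ x ∈ B' i, h i x = 0) := by
  let T (n : ℕ) := {f : B n →ₗ[R] A (n + 1) // B' n ≤ ker f ∧ a n ∘ₗ f ∘ₗ b n = c n ∘ₗ b n}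
  have step (n : ℕ) (f : T n) : ∃ f' : T (n + 1), a (n + 1) ∘ₗ f'.1 + f.1 ∘ₗ b n = c (n + 1) := by
    obtain ⟨f', hf', hf'0, hf'b⟩ := exists_homotopy_succ hB hacyc hc hcompl hbB' hcB' f.2.1 f.2.2
    exact ⟨⟨f', hf'0, hf'b⟩, hf'⟩
  choose next hnext using step
  let h₀ : T 0 := ⟨0, fun _ _ => rfl, by rw [hc0, zero_comp, comp_zero, zero_comp]⟩
  let h (n : ℕ) : T n := Nat.rec h₀ next n
  exact ⟨fun n => (h n).1, fun x => by rw [hc0]; exact map_zero (a 0),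
    fun n => LinearMap.congr_fun (hnext n (h n)),
    fun n _ hx => (h n).2.1 hx⟩

/-- Lemma 2.3: Let `c : (B, b) → (A, a)` be a morphism of
(nonnegatively graded) complexes of projective `R`-modules with `A` acyclic
and `c₀ = 0`.  Suppose each `Bᵢ` decomposes as `Bᵢ = Bᵢ' ⊕ Bᵢ''` with
`bᵢ(Bᵢ') ⊆ B_{i-1}'`, `cᵢ(Bᵢ') = 0` for all `i`, and `B₀ = B₀'`.  Then there
exists a homotopy `h : B → A[1]` (i.e. `cᵢ = a_{i+1} ∘ hᵢ + h_{i-1} ∘ bᵢ`,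
with `h_{-1} = 0`) such that `hᵢ(Bᵢ') = 0` for all `i`.

Complexes are encoded by families of modules with differentials
`b i : B (i+1) →ₗ B i`, `a i : A (i+1) →ₗ A i`; the direct summand `Bᵢ'` is a
submodule `B' i` (with a complement, i.e. a genuine direct summand). -/
theorem stmt4 {R : Type*} [CommRing R]
    (B A : ℕ → Type*)
    [∀ i, AddCommGroup (B i)] [∀ i, Module R (B i)]
    [∀ i, AddCommGroup (A i)] [∀ i, Module R (A i)]
    [∀ i, Module.Projective R (B i)] [∀ i, Module.Projective R (A i)]
    (b : ∀ i, B (i + 1) →ₗ[R] B i) (a : ∀ i, A (i + 1) →ₗ[R] A i)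
    (c : ∀ i, B i →ₗ[R] A i)
    -- B and A are complexes
    (hB : ∀ i, ∀ x, b i (b (i + 1) x) = 0)
    (hA : ∀ i, ∀ x, a i (a (i + 1) x) = 0)
    -- A is acyclic: homology vanishes in positive degrees
    (hacyc : ∀ i, LinearMap.range (a (i + 1)) = LinearMap.ker (a i))
    -- c is a chain map with c₀ = 0
    (hc : ∀ i, ∀ x, a i (c (i + 1) x) = c i (b i x))
    (hc0 : c 0 = 0)
    -- the direct summands Bᵢ'
    (B' : ∀ i, Submodule R (B i)) (B'' : ∀ i, Submodule R (B i))
    (hcompl : ∀ i, IsCompl (B' i) (B'' i))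
    (hbB' : ∀ i, (B' (i + 1)).map (b i) ≤ B' i)
    (hcB' : ∀ i, ∀ x ∈ B' i, c i x = 0)
    (hB0 : B' 0 = ⊤) :
    ∃ h : ∀ i, B i →ₗ[R] A (i + 1),
      (∀ x, a 0 (h 0 x) = c 0 x) ∧
      (∀ i, ∀ x, a (i + 1) (h (i + 1) x) + h i (b i x) = c (i + 1) x) ∧
      (∀ i, ∀ x ∈ B' i, h i x = 0) :=
  stmt4_general B A b a c hB hacyc hc hc0 B' B'' hcompl hbB' hcB'
end

section
/- In the setting of Setup 2.7 (maps α : K → M a morphism of DG algebras from a length-3 Koszul complex to a length-4 Poincaré DG algebra M, and β : M → K[-1] defined by [β_i(θ_i)·φ_{4-i}]_K = (−1)^{i+1}[θ_i · α_{4-i}(φ_{4-i})]_M), the composition β ∘ α = 0. -/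
/-! Pairing `βᵢ(α φ)` against any `ψ` gives `±[α φ · α ψ]_M = ±[α (φ ψ)]_M`, and `φ ψ` lies in
`K₄ = 0`; since the pairings of `K` are perfect, `βᵢ(α φ) = 0`. -/

namespace LinearMap

variable {R M₁ M₂ P Q : Type*} [CommSemiring R]
  [AddCommMonoid M₁] [AddCommMonoid M₂] [AddCommMonoid P] [AddCommMonoid Q]
  [Module R M₁] [Module R M₂] [Module R P] [Module R Q]
  {B : M₁ →ₗ[R] M₂ →ₗ[R] P}

theorem SeparatingLeft.eq_zero_of_forall_equiv_apply_eq_zero (hB : B.SeparatingLeft)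
    (e : P ≃ₗ[R] Q) {x : M₁} (hx : ∀ y, e (B x y) = 0) : x = 0 :=
  hB x fun y ↦ e.map_eq_zero_iff.mp (hx y)

theorem SeparatingRight.eq_zero_of_forall_equiv_apply_eq_zero (hB : B.SeparatingRight)
    (e : P ≃ₗ[R] Q) {y : M₂} (hy : ∀ x, e (B x y) = 0) : y = 0 :=
  hB y fun x ↦ e.map_eq_zero_iff.mp (hy x)

end LinearMap

theorem LinearEquiv.eq_zero_of_forall_mul_apply_eq_zero {R M : Type*} [CommSemiring R]
    [AddCommMonoid M] [Module R M] (e : M ≃ₗ[R] R) {a : R} (ha : ∀ m, a * e m = 0) : a = 0 := by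
  simpa using ha (e.symm 1)

theorem stmt8_general
    {R : Type*} [CommRing R]
    {K1 K2 K3 M1 M2 M3 M4 : Type*}
    [AddCommGroup K1] [AddCommGroup K2] [AddCommGroup K3]
    [AddCommGroup M1] [AddCommGroup M2] [AddCommGroup M3] [AddCommGroup M4]
    [Module R K1] [Module R K2] [Module R K3]
    [Module R M1] [Module R M2] [Module R M3] [Module R M4]
    -- graded multiplications on K and on M
    (kmul12 : K1 →ₗ[R] K2 →ₗ[R] K3)
    (mmul13 : M1 →ₗ[R] M3 →ₗ[R] M4) (mmul22 : M2 →ₗ[R] M2 →ₗ[R] M4)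
    -- orientations [-]_K and [-]_M
    (ωK : K3 ≃ₗ[R] R) (ωM : M4 ≃ₗ[R] R)
    -- the comparison morphism α : K → M (α₀ = id_R)
    (α1 : K1 →ₗ[R] M1) (α2 : K2 →ₗ[R] M2) (α3 : K3 →ₗ[R] M3)
    -- the duality map β : M → K[-1]
    (β1 : M1 →ₗ[R] R) (β2 : M2 →ₗ[R] K1) (β3 : M3 →ₗ[R] K2)
    -- defining property of β in each degree: [βᵢ(θ)·φ]_K = (-1)^{i+1}[θ·α_{4-i}(φ)]_M
    (hβ1 : ∀ (θ : M1) (φ : K3), β1 θ * ωK φ = ωM (mmul13 θ (α3 φ)))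
    (hβ2 : ∀ (θ : M2) (φ : K2), ωK (kmul12 (β2 θ) φ) = - ωM (mmul22 θ (α2 φ)))
    (hβ3 : ∀ (θ : M3) (φ : K1), ωK (kmul12 φ (β3 θ)) = - ωM (mmul13 (α1 φ) θ))
    -- α is multiplicative and K₄ = 0, so degree-4 products of α-images vanish
    (hαtop13 : ∀ (φ : K1) (ψ : K3), mmul13 (α1 φ) (α3 ψ) = 0)
    (hαtop22 : ∀ (φ ψ : K2), mmul22 (α2 φ) (α2 ψ) = 0)
    -- the pairings K₁ ⊗ K₂ → K₃ of the Koszul algebra are perfect (nondegenerate)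
    (hKnd1 : ∀ x : K1, (∀ y : K2, kmul12 x y = 0) → x = 0)
    (hKnd2 : ∀ y : K2, (∀ x : K1, kmul12 x y = 0) → y = 0) :
    (∀ φ : K1, β1 (α1 φ) = 0) ∧ (∀ φ : K2, β2 (α2 φ) = 0) ∧
      (∀ φ : K3, β3 (α3 φ) = 0) := by
  have hKleft : kmul12.SeparatingLeft := hKnd1
  have hKright : kmul12.SeparatingRight := hKnd2
  refine ⟨fun φ ↦ ?_, fun φ ↦ ?_, fun φ ↦ ?_⟩
  · refine ωK.eq_zero_of_forall_mul_apply_eq_zero fun ψ ↦ ?_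
    rw [hβ1, hαtop13, map_zero]
  · refine hKleft.eq_zero_of_forall_equiv_apply_eq_zero ωK fun ψ ↦ ?_
    rw [hβ2, hαtop22, map_zero, neg_zero]
  · refine hKright.eq_zero_of_forall_equiv_apply_eq_zero ωK fun ψ ↦ ?_
    rw [hβ3, hαtop13, map_zero, neg_zero]

/-- Proposition 3.1(1): In the setting of Setup 2.7, with
`α : K → M` a DG algebra morphism from the length-3 Koszul complex `K` to the
length-4 Poincaré DG algebra `M`, and `β : M → K[-1]` defined by
`[βᵢ(θ)·φ]_K = (-1)^{i+1} [θ·α_{4-i}(φ)]_M`, one has `β ∘ α = 0`.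

`K₀ = M₀ = R`, `α₀ = id`; the defining property of `β` is expressed degreewise
via the orientations `ωK : K₃ ≃ R`, `ωM : M₄ ≃ R`.  That `K` is a length-3
complex (`K₄ = 0`) and `α` multiplicative is reflected in the hypotheses that
products of `α`-images landing in degree 4 vanish. -/
theorem stmt8
    {R : Type*} [CommRing R]
    {K1 K2 K3 M1 M2 M3 M4 : Type*}
    [AddCommGroup K1] [AddCommGroup K2] [AddCommGroup K3]
    [AddCommGroup M1] [AddCommGroup M2] [AddCommGroup M3] [AddCommGroup M4]
    [Module R K1] [Module R K2] [Module R K3]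
    [Module R M1] [Module R M2] [Module R M3] [Module R M4]
    -- differentials of the Koszul complex K (K₀ = R) and of M (M₀ = R)
    (k1 : K1 →ₗ[R] R) (k2 : K2 →ₗ[R] K1) (k3 : K3 →ₗ[R] K2)
    (m1 : M1 →ₗ[R] R) (m2 : M2 →ₗ[R] M1) (m3 : M3 →ₗ[R] M2) (m4 : M4 →ₗ[R] M3)
    -- graded multiplications on K and on M
    (kmul11 : K1 →ₗ[R] K1 →ₗ[R] K2) (kmul12 : K1 →ₗ[R] K2 →ₗ[R] K3)
    (mmul11 : M1 →ₗ[R] M1 →ₗ[R] M2) (mmul12 : M1 →ₗ[R] M2 →ₗ[R] M3)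
    (mmul13 : M1 →ₗ[R] M3 →ₗ[R] M4) (mmul22 : M2 →ₗ[R] M2 →ₗ[R] M4)
    -- orientations [-]_K and [-]_M
    (ωK : K3 ≃ₗ[R] R) (ωM : M4 ≃ₗ[R] R)
    -- the comparison morphism α : K → M (α₀ = id_R)
    (α1 : K1 →ₗ[R] M1) (α2 : K2 →ₗ[R] M2) (α3 : K3 →ₗ[R] M3)
    -- the duality map β : M → K[-1]
    (β1 : M1 →ₗ[R] R) (β2 : M2 →ₗ[R] K1) (β3 : M3 →ₗ[R] K2) (β4 : M4 →ₗ[R] K3)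
    -- defining property of β in each degree: [βᵢ(θ)·φ]_K = (-1)^{i+1}[θ·α_{4-i}(φ)]_M
    (hβ1 : ∀ (θ : M1) (φ : K3), β1 θ * ωK φ = ωM (mmul13 θ (α3 φ)))
    (hβ2 : ∀ (θ : M2) (φ : K2), ωK (kmul12 (β2 θ) φ) = - ωM (mmul22 θ (α2 φ)))
    (hβ3 : ∀ (θ : M3) (φ : K1), ωK (kmul12 φ (β3 θ)) = - ωM (mmul13 (α1 φ) θ))
    -- α is multiplicative and K₄ = 0, so degree-4 products of α-images vanish
    (hαtop13 : ∀ (φ : K1) (ψ : K3), mmul13 (α1 φ) (α3 ψ) = 0)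
    (hαtop22 : ∀ (φ ψ : K2), mmul22 (α2 φ) (α2 ψ) = 0)
    -- the pairings K₁ ⊗ K₂ → K₃ of the Koszul algebra are perfect (nondegenerate)
    (hKnd1 : ∀ x : K1, (∀ y : K2, kmul12 x y = 0) → x = 0)
    (hKnd2 : ∀ y : K2, (∀ x : K1, kmul12 x y = 0) → y = 0) :
    (∀ φ : K1, β1 (α1 φ) = 0) ∧ (∀ φ : K2, β2 (α2 φ) = 0) ∧
      (∀ φ : K3, β3 (α3 φ) = 0) :=
  stmt8_general kmul12 mmul13 mmul22 ωK ωM α1 α2 α3 β1 β2 β3 hβ1 hβ2 hβ3 hαtop13 hαtop22 hKnd1 hKnd2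
end

section
/- With c_3 as in Proposition 4.2 and α, β as in Setup 2.7, c_3 vanishes on ∧²M_1 ∧ α_1(K_1); that is, c_3(θ_1 ∧ θ_1' ∧ α_1(φ_1)) = 0 for all θ_1, θ_1' ∈ M_1 and φ_1 ∈ K_1. -/
theorem map_mul_right_eq_neg_smul_of_anticomm
    {R K1 M1 M2 : Type*} [CommRing R]
    [AddCommGroup K1] [AddCommGroup M1] [AddCommGroup M2]
    [Module R K1] [Module R M1] [Module R M2]
    (mul : M1 →ₗ[R] M1 →ₗ[R] M2) (α1 : K1 →ₗ[R] M1) (β1 : M1 →ₗ[R] R) (β2 : M2 →ₗ[R] K1)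
    (hmix : ∀ (φ : K1) (θ : M1), β2 (mul (α1 φ) θ) = β1 θ • φ)
    (hcomm : ∀ x y : M1, mul x y = - mul y x) (θ : M1) (φ : K1) :
    β2 (mul θ (α1 φ)) = -(β1 θ • φ) := by
  rw [hcomm, map_neg, hmix]

theorem stmt13_general
    {R : Type*} [CommRing R]
    {K1 M1 M2 : Type*}
    [AddCommGroup K1]
    [AddCommGroup M1] [AddCommGroup M2]
    [Module R K1]
    [Module R M1] [Module R M2]
    -- graded multiplications on K and on M
    (mmul11 : M1 →ₗ[R] M1 →ₗ[R] M2)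
    -- the comparison morphism α : K → M (α₀ = id_R)
    (α1 : K1 →ₗ[R] M1)
    -- the duality map β : M → K[-1]
    (β1 : M1 →ₗ[R] R) (β2 : M2 →ₗ[R] K1)
    -- β∘α = 0 and β(α(φ)·θ) = φ·β(θ) (Proposition 3.1), graded commutativity
    (hβα1 : ∀ φ : K1, β1 (α1 φ) = 0)
    (hβmix11 : ∀ (φ : K1) (θ : M1), β2 (mmul11 (α1 φ) θ) = β1 θ • φ)
    (hM11comm : ∀ x y : M1, mmul11 x y = - mmul11 y x) :
    ∀ (θ θ' : M1) (φ : K1),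
      β1 (α1 φ) • β2 (mmul11 θ θ') - β1 θ' • β2 (mmul11 θ (α1 φ))
        + β1 θ • β2 (mmul11 θ' (α1 φ)) = 0 := by
  intro θ θ' φ
  have hmul := map_mul_right_eq_neg_smul_of_anticomm mmul11 α1 β1 β2 hβmix11 hM11comm
  rw [hβα1, hmul θ, hmul θ', zero_smul, smul_neg, smul_neg, smul_comm]
  abel

/-- Proposition 4.3, last item: With
`c₃(θ∧θ'∧θ'') = β₂(θ∧θ')β₁(θ'') - β₂(θ∧θ'')β₁(θ') + β₂(θ'∧θ'')β₁(θ)`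
and `α, β` as in Setup 2.7, `c₃` vanishes on `⋀²M₁ ∧ α₁(K₁)`:
`c₃(θ₁ ∧ θ₁' ∧ α₁(φ₁)) = 0` for all `θ₁, θ₁' ∈ M₁`, `φ₁ ∈ K₁`. -/
theorem stmt13
    {R : Type*} [CommRing R]
    {K1 K2 K3 M1 M2 M3 M4 : Type*}
    [AddCommGroup K1] [AddCommGroup K2] [AddCommGroup K3]
    [AddCommGroup M1] [AddCommGroup M2] [AddCommGroup M3] [AddCommGroup M4]
    [Module R K1] [Module R K2] [Module R K3]
    [Module R M1] [Module R M2] [Module R M3] [Module R M4]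
    -- differentials of the Koszul complex K (K₀ = R) and of M (M₀ = R)
    (k1 : K1 →ₗ[R] R) (k2 : K2 →ₗ[R] K1) (k3 : K3 →ₗ[R] K2)
    (m1 : M1 →ₗ[R] R) (m2 : M2 →ₗ[R] M1) (m3 : M3 →ₗ[R] M2) (m4 : M4 →ₗ[R] M3)
    -- graded multiplications on K and on M
    (kmul11 : K1 →ₗ[R] K1 →ₗ[R] K2) (kmul12 : K1 →ₗ[R] K2 →ₗ[R] K3)
    (mmul11 : M1 →ₗ[R] M1 →ₗ[R] M2) (mmul12 : M1 →ₗ[R] M2 →ₗ[R] M3)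
    (mmul13 : M1 →ₗ[R] M3 →ₗ[R] M4) (mmul22 : M2 →ₗ[R] M2 →ₗ[R] M4)
    -- orientations [-]_K and [-]_M
    (ωK : K3 ≃ₗ[R] R) (ωM : M4 ≃ₗ[R] R)
    -- the comparison morphism α : K → M (α₀ = id_R)
    (α1 : K1 →ₗ[R] M1) (α2 : K2 →ₗ[R] M2) (α3 : K3 →ₗ[R] M3)
    -- the duality map β : M → K[-1]
    (β1 : M1 →ₗ[R] R) (β2 : M2 →ₗ[R] K1) (β3 : M3 →ₗ[R] K2) (β4 : M4 →ₗ[R] K3)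
    -- β∘α = 0 and β(α(φ)·θ) = φ·β(θ) (Proposition 3.1), graded commutativity
    (hβα1 : ∀ φ : K1, β1 (α1 φ) = 0)
    (hβmix11 : ∀ (φ : K1) (θ : M1), β2 (mmul11 (α1 φ) θ) = β1 θ • φ)
    (hM11comm : ∀ x y : M1, mmul11 x y = - mmul11 y x) :
    ∀ (θ θ' : M1) (φ : K1),
      β1 (α1 φ) • β2 (mmul11 θ θ') - β1 θ' • β2 (mmul11 θ (α1 φ))
        + β1 θ • β2 (mmul11 θ' (α1 φ)) = 0 :=
  stmt13_general mmul11 α1 β1 β2 hβα1 hβmix11 hM11comm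
end

section
/- With c_4 as in Proposition 4.2, c_4(θ_1 ∧ α_1(φ_1) ⊗ θ_2) = 0 for all θ_1 ∈ M_1, φ_1 ∈ K_1, θ_2 ∈ M_2; i.e., c_4 vanishes on M_1 ∧ α_1(K_1) ⊗ M_2. -/
theorem stmt14_general
    {R : Type*} [CommRing R]
    {K1 K2 M1 M2 M3 : Type*}
    [AddCommGroup K1] [AddCommGroup K2]
    [AddCommGroup M1] [AddCommGroup M2] [AddCommGroup M3]
    [Module R K1] [Module R K2]
    [Module R M1] [Module R M2] [Module R M3]
    -- graded multiplications on K and on M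
    (kmul11 : K1 →ₗ[R] K1 →ₗ[R] K2)
    (mmul11 : M1 →ₗ[R] M1 →ₗ[R] M2) (mmul12 : M1 →ₗ[R] M2 →ₗ[R] M3)
    -- the comparison morphism α : K → M (α₀ = id_R)
    (α1 : K1 →ₗ[R] M1)
    -- the duality map β : M → K[-1]
    (β1 : M1 →ₗ[R] R) (β2 : M2 →ₗ[R] K1) (β3 : M3 →ₗ[R] K2)
    -- β∘α = 0 and β(α(φ)·θ) = φ·β(θ) (Proposition 3.1), graded commutativity
    (hβα1 : ∀ φ : K1, β1 (α1 φ) = 0)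
    (hβmix11 : ∀ (φ : K1) (θ : M1), β2 (mmul11 (α1 φ) θ) = β1 θ • φ)
    (hβmix12 : ∀ (φ : K1) (θ : M2), β3 (mmul12 (α1 φ) θ) = kmul11 φ (β2 θ))
    (hM11comm : ∀ x y : M1, mmul11 x y = - mmul11 y x) :
    ∀ (θ : M1) (φ : K1) (θ2 : M2),
      β1 (α1 φ) • β3 (mmul12 θ θ2) - β1 θ • β3 (mmul12 (α1 φ) θ2)
        - kmul11 (β2 (mmul11 θ (α1 φ))) (β2 θ2) = 0 := by
  intro θ φ θ2
  have hβ2 : β2 (mmul11 θ (α1 φ)) = -(β1 θ • φ) := by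
    rw [hM11comm, map_neg, hβmix11]
  rw [hβα1, hβmix12, hβ2, map_neg, map_smul, LinearMap.neg_apply, LinearMap.smul_apply,
    zero_smul, zero_sub, sub_neg_eq_add, neg_add_cancel]

/-- Proposition 4.3, first item: With
`c₄(θ∧θ'⊗θ₂) = β₁(θ')β₃(θ·θ₂) - β₁(θ)β₃(θ'·θ₂) - β₂(θ∧θ')β₂(θ₂)`
and `α, β` as in Setup 2.7, `c₄` vanishes on `M₁ ∧ α₁(K₁) ⊗ M₂`:
`c₄(θ₁ ∧ α₁(φ₁) ⊗ θ₂) = 0` for all `θ₁ ∈ M₁`, `φ₁ ∈ K₁`, `θ₂ ∈ M₂`. -/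
theorem stmt14
    {R : Type*} [CommRing R]
    {K1 K2 K3 M1 M2 M3 M4 : Type*}
    [AddCommGroup K1] [AddCommGroup K2] [AddCommGroup K3]
    [AddCommGroup M1] [AddCommGroup M2] [AddCommGroup M3] [AddCommGroup M4]
    [Module R K1] [Module R K2] [Module R K3]
    [Module R M1] [Module R M2] [Module R M3] [Module R M4]
    -- differentials of the Koszul complex K (K₀ = R) and of M (M₀ = R)
    (k1 : K1 →ₗ[R] R) (k2 : K2 →ₗ[R] K1) (k3 : K3 →ₗ[R] K2)
    (m1 : M1 →ₗ[R] R) (m2 : M2 →ₗ[R] M1) (m3 : M3 →ₗ[R] M2) (m4 : M4 →ₗ[R] M3)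
    -- graded multiplications on K and on M
    (kmul11 : K1 →ₗ[R] K1 →ₗ[R] K2) (kmul12 : K1 →ₗ[R] K2 →ₗ[R] K3)
    (mmul11 : M1 →ₗ[R] M1 →ₗ[R] M2) (mmul12 : M1 →ₗ[R] M2 →ₗ[R] M3)
    (mmul13 : M1 →ₗ[R] M3 →ₗ[R] M4) (mmul22 : M2 →ₗ[R] M2 →ₗ[R] M4)
    -- orientations [-]_K and [-]_M
    (ωK : K3 ≃ₗ[R] R) (ωM : M4 ≃ₗ[R] R)
    -- the comparison morphism α : K → M (α₀ = id_R)
    (α1 : K1 →ₗ[R] M1) (α2 : K2 →ₗ[R] M2) (α3 : K3 →ₗ[R] M3)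
    -- the duality map β : M → K[-1]
    (β1 : M1 →ₗ[R] R) (β2 : M2 →ₗ[R] K1) (β3 : M3 →ₗ[R] K2) (β4 : M4 →ₗ[R] K3)
    -- β∘α = 0 and β(α(φ)·θ) = φ·β(θ) (Proposition 3.1), graded commutativity
    (hβα1 : ∀ φ : K1, β1 (α1 φ) = 0)
    (hβmix11 : ∀ (φ : K1) (θ : M1), β2 (mmul11 (α1 φ) θ) = β1 θ • φ)
    (hβmix12 : ∀ (φ : K1) (θ : M2), β3 (mmul12 (α1 φ) θ) = kmul11 φ (β2 θ))
    (hM11comm : ∀ x y : M1, mmul11 x y = - mmul11 y x)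
    (hK11comm : ∀ x y : K1, kmul11 x y = - kmul11 y x) :
    ∀ (θ : M1) (φ : K1) (θ2 : M2),
      β1 (α1 φ) • β3 (mmul12 θ θ2) - β1 θ • β3 (mmul12 (α1 φ) θ2)
        - kmul11 (β2 (mmul11 θ (α1 φ))) (β2 θ2) = 0 :=
  stmt14_general kmul11 mmul11 mmul12 α1 β1 β2 β3 hβα1 hβmix11 hβmix12 hM11comm
end

section
/- Let X : ∧²M_1 → M_2 and X^t : M_1 ⊗ M_2 → M_3 be the maps defined via Poincaré duality on M by X(θ_1∧θ_1')·θ_2 = (β_4^{-1}∘h_4)(θ_1∧θ_1'⊗θ_2) = θ_1'·X^t(θ_1⊗θ_2), where h is the modified nullhomotopy of Corollary 4.4. Then β_2(X(θ_1∧θ_1')) = 0 and β_3(X^t(θ_1⊗θ_2)) = 0 for all θ_1, θ_1' ∈ M_1 and θ_2 ∈ M_2. -/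
/-!
`β₂(y)` and `β₃(z)` are detected through the perfect Koszul pairing `K₁ ⊗ K₂ → K₃`: up to sign
and orientation, pairing them against `K₂`, resp. `K₁`, is the product of `y` with `α₂(K₂)`,
resp. of `z` with `α₁(K₁)`, in `M₄`. For `y = X(θ∧θ')` and `z = Xᵗ(θ⊗θ₂)` these products are
`β₄⁻¹ h₄(θ∧θ'⊗α₂φ)` and `β₄⁻¹ h₄(θ∧α₁φ⊗θ₂)`, which vanish by the choice of `h`.
-/

section DualityPairing

variable {R A B C N P Q : Type*} [CommRing R]
  [AddCommGroup A] [AddCommGroup B] [AddCommGroup C]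
  [AddCommGroup N] [AddCommGroup P] [AddCommGroup Q]
  [Module R A] [Module R B] [Module R C] [Module R N] [Module R P] [Module R Q]

theorem eq_zero_of_forall_mul_comp_eq_zero
    (pairK : A →ₗ[R] B →ₗ[R] C) (pairM : N →ₗ[R] P →ₗ[R] Q)
    (ωK : C ≃ₗ[R] R) (ωM : Q →ₗ[R] R) (β : N → A) (α : B →ₗ[R] P) {θ : N}
    (hβ : ∀ φ, ωK (pairK (β θ) φ) = -ωM (pairM θ (α φ)))
    (hnd : ∀ x, (∀ y, pairK x y = 0) → x = 0)
    (hθ : ∀ φ, pairM θ (α φ) = 0) : β θ = 0 :=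
  hnd _ fun φ => ωK.injective <| by rw [hβ, hθ, map_zero, neg_zero, map_zero]

end DualityPairing

theorem stmt17_general
    {R : Type*} [CommRing R]
    {K1 K2 K3 M1 M2 M3 M4 : Type*}
    [AddCommGroup K1] [AddCommGroup K2] [AddCommGroup K3]
    [AddCommGroup M1] [AddCommGroup M2] [AddCommGroup M3] [AddCommGroup M4]
    [Module R K1] [Module R K2] [Module R K3]
    [Module R M1] [Module R M2] [Module R M3] [Module R M4]
    -- graded multiplications on K and on M
    (kmul12 : K1 →ₗ[R] K2 →ₗ[R] K3)
    (mmul13 : M1 →ₗ[R] M3 →ₗ[R] M4) (mmul22 : M2 →ₗ[R] M2 →ₗ[R] M4)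
    -- orientations [-]_K and [-]_M
    (ωK : K3 ≃ₗ[R] R) (ωM : M4 ≃ₗ[R] R)
    -- the comparison morphism α : K → M (α₀ = id_R)
    (α1 : K1 →ₗ[R] M1) (α2 : K2 →ₗ[R] M2)
    -- the duality map β : M → K[-1]
    (β2 : M2 →ₗ[R] K1) (β3 : M3 →ₗ[R] K2) (β4 : M4 →ₗ[R] K3)
    (X : M1 →ₗ[R] M1 →ₗ[R] M2) (Xt : M1 →ₗ[R] M2 →ₗ[R] M3)
    (h4 : M1 →ₗ[R] M1 →ₗ[R] M2 →ₗ[R] K3)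
    -- defining property of X and Xᵗ via the duality pairings of M
    (hXdef : ∀ (θ θ' : M1) (θ2 : M2), β4 (mmul22 (X θ θ') θ2) = h4 θ θ' θ2)
    (hXtdef : ∀ (θ θ' : M1) (θ2 : M2),
      mmul22 (X θ θ') θ2 = mmul13 θ' (Xt θ θ2))
    -- vanishing properties of the modified nullhomotopy h (Corollary 4.4)
    (hh4a : ∀ (θ : M1) (φ : K1) (θ2 : M2), h4 θ (α1 φ) θ2 = 0)
    (hh4b : ∀ (θ θ' : M1) (φ : K2), h4 θ θ' (α2 φ) = 0)
    -- β₄ is an isomorphism; defining property of β₂, β₃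
    (hβ4inj : Function.Injective β4)
    (hβ2 : ∀ (θ : M2) (φ : K2), ωK (kmul12 (β2 θ) φ) = - ωM (mmul22 θ (α2 φ)))
    (hβ3 : ∀ (θ : M3) (φ : K1), ωK (kmul12 φ (β3 θ)) = - ωM (mmul13 (α1 φ) θ))
    -- the Koszul pairing K₁ ⊗ K₂ → K₃ is perfect (nondegenerate)
    (hKnd1 : ∀ x : K1, (∀ y : K2, kmul12 x y = 0) → x = 0)
    (hKnd2 : ∀ y : K2, (∀ x : K1, kmul12 x y = 0) → y = 0) :
    (∀ θ θ' : M1, β2 (X θ θ') = 0) ∧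
    (∀ (θ : M1) (θ2 : M2), β3 (Xt θ θ2) = 0) := by
  have mul_X_eq_zero {θ θ' : M1} {θ2 : M2} (h : h4 θ θ' θ2 = 0) : mmul22 (X θ θ') θ2 = 0 :=
    hβ4inj (by rw [hXdef, h, map_zero])
  constructor
  · intro θ θ'
    exact eq_zero_of_forall_mul_comp_eq_zero kmul12 mmul22 ωK ωM.toLinearMap β2 α2
      (hβ2 _) hKnd1 fun φ => mul_X_eq_zero (hh4b θ θ' φ)
  · intro θ θ2
    exact eq_zero_of_forall_mul_comp_eq_zero kmul12.flip mmul13.flip ωK ωM.toLinearMap β3 α1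
      (hβ3 _) hKnd2 fun φ => (hXtdef θ (α1 φ) θ2).symm.trans (mul_X_eq_zero (hh4a θ φ θ2))

/-- Definition 4.5 and Proposition 4.6 (1),(2): Let
`X : ⋀²M₁ → M₂` and `Xᵗ : M₁ ⊗ M₂ → M₃` be defined via Poincaré duality on
`M` by `X(θ₁∧θ₁')·θ₂ = (β₄⁻¹ ∘ h₄)(θ₁∧θ₁'⊗θ₂) = θ₁'·Xᵗ(θ₁⊗θ₂)`, where `h` is
the modified nullhomotopy of Corollary 4.4.  Then `β₂(X(θ₁∧θ₁')) = 0` and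
`β₃(Xᵗ(θ₁⊗θ₂)) = 0`.

`X` is encoded as a bilinear alternating map, `Xᵗ` as a bilinear map, `h₄`
(restricted to `⋀²M₁ ⊗ M₂`) as a trilinear map alternating in the first two
arguments, with the vanishing properties of Corollary 4.4 as hypotheses. -/
theorem stmt17
    {R : Type*} [CommRing R]
    {K1 K2 K3 M1 M2 M3 M4 : Type*}
    [AddCommGroup K1] [AddCommGroup K2] [AddCommGroup K3]
    [AddCommGroup M1] [AddCommGroup M2] [AddCommGroup M3] [AddCommGroup M4]
    [Module R K1] [Module R K2] [Module R K3]
    [Module R M1] [Module R M2] [Module R M3] [Module R M4]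
    -- differentials of the Koszul complex K (K₀ = R) and of M (M₀ = R)
    (k1 : K1 →ₗ[R] R) (k2 : K2 →ₗ[R] K1) (k3 : K3 →ₗ[R] K2)
    (m1 : M1 →ₗ[R] R) (m2 : M2 →ₗ[R] M1) (m3 : M3 →ₗ[R] M2) (m4 : M4 →ₗ[R] M3)
    -- graded multiplications on K and on M
    (kmul11 : K1 →ₗ[R] K1 →ₗ[R] K2) (kmul12 : K1 →ₗ[R] K2 →ₗ[R] K3)
    (mmul11 : M1 →ₗ[R] M1 →ₗ[R] M2) (mmul12 : M1 →ₗ[R] M2 →ₗ[R] M3)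
    (mmul13 : M1 →ₗ[R] M3 →ₗ[R] M4) (mmul22 : M2 →ₗ[R] M2 →ₗ[R] M4)
    -- orientations [-]_K and [-]_M
    (ωK : K3 ≃ₗ[R] R) (ωM : M4 ≃ₗ[R] R)
    -- the comparison morphism α : K → M (α₀ = id_R)
    (α1 : K1 →ₗ[R] M1) (α2 : K2 →ₗ[R] M2) (α3 : K3 →ₗ[R] M3)
    -- the duality map β : M → K[-1]
    (β1 : M1 →ₗ[R] R) (β2 : M2 →ₗ[R] K1) (β3 : M3 →ₗ[R] K2) (β4 : M4 →ₗ[R] K3)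
    (X : M1 →ₗ[R] M1 →ₗ[R] M2) (Xt : M1 →ₗ[R] M2 →ₗ[R] M3)
    (h4 : M1 →ₗ[R] M1 →ₗ[R] M2 →ₗ[R] K3)
    -- defining property of X and Xᵗ via the duality pairings of M
    (hXdef : ∀ (θ θ' : M1) (θ2 : M2), β4 (mmul22 (X θ θ') θ2) = h4 θ θ' θ2)
    (hXtdef : ∀ (θ θ' : M1) (θ2 : M2),
      mmul22 (X θ θ') θ2 = mmul13 θ' (Xt θ θ2))
    (hXalt : ∀ θ : M1, X θ θ = 0)
    (h4alt : ∀ (θ : M1) (θ2 : M2), h4 θ θ θ2 = 0)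
    -- vanishing properties of the modified nullhomotopy h (Corollary 4.4)
    (hh4a : ∀ (θ : M1) (φ : K1) (θ2 : M2), h4 θ (α1 φ) θ2 = 0)
    (hh4a' : ∀ (θ : M1) (φ : K1) (θ2 : M2), h4 (α1 φ) θ θ2 = 0)
    (hh4b : ∀ (θ θ' : M1) (φ : K2), h4 θ θ' (α2 φ) = 0)
    (hh4c : ∀ (θ θ' : M1) (φ : K1), h4 θ θ' (mmul11 (α1 φ) θ) = 0)
    (hh4d : ∀ (θ θ' θ'' : M1) (φ : K1),
      h4 θ θ' (mmul11 (α1 φ) θ'') + h4 θ'' θ' (mmul11 (α1 φ) θ) = 0)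
    -- β₄ is an isomorphism; defining property of β₂, β₃
    (hβ4inj : Function.Injective β4)
    (hβ2 : ∀ (θ : M2) (φ : K2), ωK (kmul12 (β2 θ) φ) = - ωM (mmul22 θ (α2 φ)))
    (hβ3 : ∀ (θ : M3) (φ : K1), ωK (kmul12 φ (β3 θ)) = - ωM (mmul13 (α1 φ) θ))
    -- the Koszul pairing K₁ ⊗ K₂ → K₃ is perfect (nondegenerate)
    (hKnd1 : ∀ x : K1, (∀ y : K2, kmul12 x y = 0) → x = 0)
    (hKnd2 : ∀ y : K2, (∀ x : K1, kmul12 x y = 0) → y = 0) :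
    (∀ θ θ' : M1, β2 (X θ θ') = 0) ∧
    (∀ (θ : M1) (θ2 : M2), β3 (Xt θ θ2) = 0) :=
  stmt17_general kmul12 mmul13 mmul22 ωK ωM α1 α2 β2 β3 β4 X Xt h4 hXdef hXtdef hh4a hh4b hβ4inj hβ2
    hβ3 hKnd1 hKnd2
end
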